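/- För every θ ∈ (0,1) and every real μ ≥ 1 there exists a constant C > 0, independent of n, such that for every integer n ≥ 1 and every vector u ∈ ℝⁿ with nonnegative entries, N_{θ,n}(𝔏_n(u^μ)) ≤ C · N_{θ,n}(𝔏_n u) · (max_{1≤i≤n} u_i)^{μ−1}, where u^μ ∈ ℝⁿ denotes the vector with entries u_i^μ. (Discrete Sobolev power estimate ‖u^μ‖_{𝐇^θ_n} ≲ ‖u‖_{𝐇^θ_n}‖u‖_∞^{μ−1} in Gagliardo-seminorm form.) -/

import Mathlib

open MeasureTheory

/-- The continuous piecewise-linear interpolant `𝔏_n u : [0,1] → ℝ` of a vector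
`u` (entries `u 1, …, u n`, with the convention `u₀ = u_{n+1} = 0`): it is affine on
each cell `Δ_i = [i h_n, (i+1) h_n]`, `h_n = 1/(n+1)`, and takes value `u i` at `i h_n`. -/
noncomputable def linInterp (n : ℕ) (u : ℕ → ℝ) : ℝ → ℝ := fun x =>
  ∑ i ∈ Finset.Icc 1 n, u i * max 0 (1 - |((n : ℝ) + 1) * x - (i : ℝ)|)

/-- The squared truncated Gagliardo seminorm
`N_{θ,n}(f)² = ∑_{|i-j|≤1, 0≤i,j≤n} ∬_{Δ_i×Δ_j} |f(x)-f(y)|²/|x-y|^{1+2θ} dx dy`,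
with cells `Δ_i = [i h_n, (i+1) h_n]`, `h_n = 1/(n+1)`. -/
noncomputable def gagliardoSq (θ : ℝ) (n : ℕ) (f : ℝ → ℝ) : ℝ :=
  ∑ i ∈ Finset.range (n + 1), ∑ j ∈ Finset.range (n + 1),
    if i ≤ j + 1 ∧ j ≤ i + 1 then
      ∫ x in Set.Icc ((i : ℝ) / ((n : ℝ) + 1)) (((i : ℝ) + 1) / ((n : ℝ) + 1)),
        ∫ y in Set.Icc ((j : ℝ) / ((n : ℝ) + 1)) (((j : ℝ) + 1) / ((n : ℝ) + 1)),
          |f x - f y| ^ 2 / |x - y| ^ (1 + 2 * θ)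
    else 0

/-- The truncated Gagliardo seminorm `N_{θ,n}(f)`. -/
noncomputable def gagliardo (θ : ℝ) (n : ℕ) (f : ℝ → ℝ) : ℝ :=
  Real.sqrt (gagliardoSq θ n f)

/-!
Both interpolants are affine on every cell `Δᵢ`: `𝔏ₙ u` with slope `σᵢ = (n+1)(vᵢ₊₁ - vᵢ)`,
where `v` is `u` extended by zero, and `𝔏ₙ(u^μ)` with slope `Sᵢ = (n+1)(vᵢ₊₁^μ - vᵢ^μ)`. By the
mean value theorem `|Sᵢ| ≤ μ ‖u‖_∞^{μ-1} |σᵢ|`, so it suffices to compare `N_{θ,n}` with the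
slopes. Let `E = ∬_{Δ×Δ} |x-y|^{1-2θ}`, which is the same for every cell. The diagonal term of a
cell with slope `Sᵢ` is exactly `Sᵢ² E`, whence `N_{θ,n}(𝔏ₙ u)² ≥ E ∑ σᵢ²`. Across a node the
function is `(|Sᵢ| + |Sⱼ|)`-Lipschitz, and for `θ > 0` the kernel integral over the neighbouring
cell is at most `16` times the one over the own cell, so an off-diagonal term is at most
`32 (Sᵢ² + Sⱼ²) E`. Each cell has at most three neighbours, so `N_{θ,n}(𝔏ₙ(u^μ))² ≤ 192 E ∑ Sᵢ²`.
-/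

open Set MeasureTheory

lemma abs_rpow_sub_rpow_le {μ M a b : ℝ} (hμ : 1 ≤ μ) (ha : a ∈ Icc 0 M) (hb : b ∈ Icc 0 M) :
    |a ^ μ - b ^ μ| ≤ μ * M ^ (μ - 1) * |a - b| := by
  have hderiv : ∀ x ∈ Icc 0 M,
      HasDerivWithinAt (fun x : ℝ => x ^ μ) (μ * x ^ (μ - 1)) (Icc 0 M) x :=
    fun x _ => (Real.hasDerivAt_rpow_const (Or.inr hμ)).hasDerivWithinAt
  have hbound : ∀ x ∈ Icc 0 M, ‖μ * x ^ (μ - 1)‖ ≤ μ * M ^ (μ - 1) := fun x ⟨hx0, hxM⟩ => by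
    rw [Real.norm_eq_abs, abs_of_nonneg (by have := Real.rpow_nonneg hx0 (μ - 1); positivity)]
    gcongr
  simpa only [Real.norm_eq_abs] using
    (convex_Icc 0 M).norm_image_sub_le_of_norm_hasDerivWithin_le hderiv hbound hb ha

section Kernel

variable {p : ℝ}

lemma intervalIntegrable_abs_rpow (hp : -1 < p) (a b : ℝ) :
    IntervalIntegrable (fun t : ℝ => |t| ^ p) volume a b := by
  have hpos : ∀ c, 0 ≤ c → IntervalIntegrable (fun t : ℝ => |t| ^ p) volume 0 c :=
    fun c hc => (intervalIntegral.intervalIntegrable_rpow' hp).congr fun t ht => by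
      rw [uIoc_of_le hc] at ht
      simp [abs_of_pos ht.1]
  have hall : ∀ c, IntervalIntegrable (fun t : ℝ => |t| ^ p) volume 0 c := by
    intro c
    rcases le_total 0 c with hc | hc
    · exact hpos c hc
    · simpa using ((IntervalIntegrable.iff_comp_neg).mp (hpos (-c) (by linarith)))
  exact (hall a).symm.trans (hall b)

lemma intervalIntegrable_abs_sub_rpow (hp : -1 < p) (x a b : ℝ) :
    IntervalIntegrable (fun y => |x - y| ^ p) volume a b := by
  simpa [abs_sub_comm] using (intervalIntegrable_abs_rpow hp (a - x) (b - x)).comp_sub_right x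

lemma integrableOn_abs_sub_rpow (hp : -1 < p) (x a b : ℝ) :
    IntegrableOn (fun y => |x - y| ^ p) (Icc a b) :=
  ((intervalIntegrable_iff').mp (intervalIntegrable_abs_sub_rpow hp x a b)).mono_set
    Icc_subset_uIcc

lemma integral_abs_sub_rpow_of_le (hp : -1 < p) {x c d : ℝ} (hxc : x ≤ c) (hcd : c ≤ d) :
    ∫ y in Icc c d, |x - y| ^ p = ((d - x) ^ (p + 1) - (c - x) ^ (p + 1)) / (p + 1) := by
  rw [integral_Icc_eq_integral_Ioc, ← intervalIntegral.integral_of_le hcd,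
    intervalIntegral.integral_congr (g := fun y => (y - x) ^ p) fun y hy => by
      rw [uIcc_of_le hcd] at hy
      simp only [abs_sub_comm x, abs_of_nonneg (by linarith [hy.1] : 0 ≤ y - x)],
    intervalIntegral.integral_comp_sub_right (fun t => t ^ p) x, integral_rpow (Or.inl hp)]

lemma integral_abs_sub_rpow_of_ge (hp : -1 < p) {x c d : ℝ} (hcd : c ≤ d) (hdx : d ≤ x) :
    ∫ y in Icc c d, |x - y| ^ p = ((x - c) ^ (p + 1) - (x - d) ^ (p + 1)) / (p + 1) := by
  rw [integral_Icc_eq_integral_Ioc, ← intervalIntegral.integral_of_le hcd,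
    intervalIntegral.integral_congr (g := fun y => (x - y) ^ p) fun y hy => by
      rw [uIcc_of_le hcd] at hy
      simp only [abs_of_nonneg (by linarith [hy.2] : 0 ≤ x - y)],
    intervalIntegral.integral_comp_sub_left (fun t => t ^ p) x, integral_rpow (Or.inl hp)]

lemma integral_abs_sub_rpow_of_mem (hp : -1 < p) {x a b : ℝ} (hx : x ∈ Icc a b) :
    ∫ y in Icc a b, |x - y| ^ p = ((x - a) ^ (p + 1) + (b - x) ^ (p + 1)) / (p + 1) := by
  have hzero : (0 : ℝ) ^ (p + 1) = 0 := Real.zero_rpow (by linarith)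
  have hsplit := intervalIntegral.integral_add_adjacent_intervals
    (intervalIntegrable_abs_sub_rpow hp x a x) (intervalIntegrable_abs_sub_rpow hp x x b)
  rw [intervalIntegral.integral_of_le hx.1, intervalIntegral.integral_of_le hx.2,
    intervalIntegral.integral_of_le (hx.1.trans hx.2), ← integral_Icc_eq_integral_Ioc,
    ← integral_Icc_eq_integral_Ioc, ← integral_Icc_eq_integral_Ioc] at hsplit
  rw [← hsplit, integral_abs_sub_rpow_of_ge hp hx.1 le_rfl,
    integral_abs_sub_rpow_of_le hp le_rfl hx.2, sub_self, hzero]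
  ring

lemma integral_Icc_rpow_add_rpow {q : ℝ} (hq : -1 < q) {a b : ℝ} (hab : a ≤ b) :
    ∫ x in Icc a b, ((x - a) ^ q + (b - x) ^ q) = 2 * (b - a) ^ (q + 1) / (q + 1) := by
  have hleft : IntervalIntegrable (fun x => (x - a) ^ q) volume a b := by
    simpa using
      (intervalIntegral.intervalIntegrable_rpow' hq (a := 0) (b := b - a)).comp_sub_right a
  have hright : IntervalIntegrable (fun x => (b - x) ^ q) volume a b := by
    simpa using
      (intervalIntegral.intervalIntegrable_rpow' hq (a := b - a) (b := 0)).comp_sub_left b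
  have hzero : (0 : ℝ) ^ (q + 1) = 0 := Real.zero_rpow (by linarith)
  rw [integral_Icc_eq_integral_Ioc, ← intervalIntegral.integral_of_le hab,
    intervalIntegral.integral_add hleft hright,
    intervalIntegral.integral_comp_sub_right (fun t => t ^ q) a,
    intervalIntegral.integral_comp_sub_left (fun t => t ^ q) b, integral_rpow (Or.inl hq),
    integral_rpow (Or.inl hq)]
  simp only [sub_self, hzero]
  ring

lemma integral_integral_abs_sub_rpow (hp : -1 < p) {a b : ℝ} (hab : a ≤ b) :
    ∫ x in Icc a b, ∫ y in Icc a b, |x - y| ^ p =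
      2 * (b - a) ^ (p + 2) / ((p + 1) * (p + 2)) := by
  rw [setIntegral_congr_fun measurableSet_Icc fun x hx => integral_abs_sub_rpow_of_mem hp hx,
    MeasureTheory.integral_div, integral_Icc_rpow_add_rpow (by linarith) hab,
    show p + 1 + 1 = p + 2 by ring, div_div, mul_comm (p + 2)]

/- For a point at distance `t` from the common node of two cells of length `h`, the two sides
are `q` times the kernel integrals over the neighbouring cell and over its own cell. -/
lemma rpow_add_sub_rpow_le {q h t : ℝ} (hq0 : 0 < q) (hq2 : q ≤ 2) (ht0 : 0 ≤ t) (hth : t ≤ h) :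
    (t + h) ^ q - t ^ q ≤ 16 * ((h - t) ^ q + t ^ q) := by
  have htq := Real.rpow_nonneg ht0 q
  have hhtq := Real.rpow_nonneg (sub_nonneg.mpr hth) q
  have hmax : max t (h - t) ^ q ≤ (h - t) ^ q + t ^ q := by
    rcases max_choice t (h - t) with hm | hm <;> rw [hm] <;> linarith
  have hfour : (4 : ℝ) ^ q ≤ 16 :=
    (Real.rpow_le_rpow_of_exponent_le (by norm_num) hq2).trans_eq (by norm_num)
  have hsum : t + h ≤ 4 * max t (h - t) := by
    linarith [le_max_left t (h - t), le_max_right t (h - t)]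
  calc (t + h) ^ q - t ^ q ≤ (4 * max t (h - t)) ^ q := by
        linarith [Real.rpow_le_rpow (by linarith) hsum hq0.le]
    _ = 4 ^ q * max t (h - t) ^ q := Real.mul_rpow (by norm_num) (le_max_of_le_left ht0)
    _ ≤ 16 * ((h - t) ^ q + t ^ q) := by gcongr

lemma integral_abs_sub_rpow_right_le (hp : -1 < p) (hp1 : p ≤ 1) {a b c x : ℝ}
    (hbc : c - b = b - a) (hx : x ∈ Icc a b) :
    ∫ y in Icc b c, |x - y| ^ p ≤ 16 * ∫ y in Icc a b, |x - y| ^ p := by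
  rw [integral_abs_sub_rpow_of_le hp hx.2 (by linarith [hx.1, hx.2]),
    integral_abs_sub_rpow_of_mem hp hx, mul_div_assoc',
    show c - x = (b - x) + (b - a) by linarith, show x - a = (b - a) - (b - x) by ring]
  refine div_le_div_of_nonneg_right ?_ (by linarith)
  exact rpow_add_sub_rpow_le (by linarith) (by linarith) (sub_nonneg.mpr hx.2)
    (by linarith [hx.1])

lemma integral_abs_sub_rpow_left_le (hp : -1 < p) (hp1 : p ≤ 1) {a b c x : ℝ}
    (hbc : c - b = b - a) (hx : x ∈ Icc b c) :
    ∫ y in Icc a b, |x - y| ^ p ≤ 16 * ∫ y in Icc b c, |x - y| ^ p := by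
  rw [integral_abs_sub_rpow_of_ge hp (by linarith [hx.1, hx.2]) hx.1,
    integral_abs_sub_rpow_of_mem hp hx, mul_div_assoc',
    show x - a = (x - b) + (c - b) by linarith, show c - x = (c - b) - (x - b) by ring]
  refine div_le_div_of_nonneg_right ?_ (by linarith)
  exact (rpow_add_sub_rpow_le (by linarith) (by linarith) (sub_nonneg.mpr hx.1)
    (by linarith [hx.2])).trans_eq (by ring)

lemma integrableOn_integral_abs_sub_rpow (hp : -1 < p) (a b : ℝ) :
    IntegrableOn (fun x => ∫ y in Icc a b, |x - y| ^ p) (Icc a b) := by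
  have hcont : Continuous fun x : ℝ => ((x - a) ^ (p + 1) + (b - x) ^ (p + 1)) / (p + 1) := by
    have h := Real.continuous_rpow_const (q := p + 1) (by linarith)
    fun_prop
  exact hcont.integrableOn_Icc.congr_fun
    (fun x hx => (integral_abs_sub_rpow_of_mem hp hx).symm) measurableSet_Icc

end Kernel

def HasSlopeOn (F : ℝ → ℝ) (s : ℝ) (I : Set ℝ) : Prop :=
  ∀ x ∈ I, ∀ y ∈ I, F x - F y = s * (x - y)

lemma abs_sub_le_of_hasSlopeOn {F : ℝ → ℝ} {s s' a b c x y : ℝ}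
    (hF : HasSlopeOn F s (Icc a b)) (hF' : HasSlopeOn F s' (Icc b c))
    (hx : x ∈ Icc a b) (hy : y ∈ Icc b c) :
    |F x - F y| ≤ (|s| + |s'|) * |x - y| := by
  have hb : b ∈ Icc a b := right_mem_Icc.mpr (hx.1.trans hx.2)
  have hb' : b ∈ Icc b c := left_mem_Icc.mpr (hy.1.trans hy.2)
  have hxy : |x - y| = (b - x) + (y - b) := by
    rw [abs_sub_comm, abs_of_nonneg (by linarith [hx.2, hy.1])]; ring
  calc |F x - F y| = |s * (x - b) - s' * (y - b)| := by
        rw [← hF x hx b hb, ← hF' y hy b hb']; ring_nf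
    _ ≤ |s| * (b - x) + |s'| * (y - b) := by
        rw [show s * (x - b) - s' * (y - b) = -(s * (b - x) + s' * (y - b)) by ring, abs_neg]
        refine (abs_add_le _ _).trans_eq ?_
        rw [abs_mul, abs_mul, abs_of_nonneg (sub_nonneg.mpr hx.2),
          abs_of_nonneg (sub_nonneg.mpr hy.1)]
    _ ≤ (|s| + |s'|) * |x - y| := by
        rw [hxy]
        nlinarith [abs_nonneg s, abs_nonneg s', sub_nonneg.mpr hx.2, sub_nonneg.mpr hy.1]

lemma setIntegral_mono_on_of_nonneg {X : Type*} [MeasurableSpace X] {μ : Measure X} {s : Set X}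
    (hs : MeasurableSet s) {f g : X → ℝ} (hf : ∀ x ∈ s, 0 ≤ f x) (hg : IntegrableOn g s μ)
    (h : ∀ x ∈ s, f x ≤ g x) : ∫ x in s, f x ∂μ ≤ ∫ x in s, g x ∂μ :=
  integral_mono_of_nonneg ((ae_restrict_iff' hs).mpr (ae_of_all _ hf)) hg
    ((ae_restrict_iff' hs).mpr (ae_of_all _ h))

section Gagliardo

variable {θ : ℝ}

lemma abs_sq_div_rpow_eq {d : ℝ} (hd : d ≠ 0) :
    |d| ^ 2 / |d| ^ (1 + 2 * θ) = |d| ^ (1 - 2 * θ) := by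
  rw [← Real.rpow_two, ← Real.rpow_sub (abs_pos.mpr hd)]
  ring_nf

lemma abs_sq_div_rpow_le {u d K : ℝ} (h : |u| ≤ K * |d|) :
    |u| ^ 2 / |d| ^ (1 + 2 * θ) ≤ K ^ 2 * |d| ^ (1 - 2 * θ) := by
  rcases eq_or_ne d 0 with rfl | hd
  · obtain rfl : u = 0 := abs_nonpos_iff.mp (by simpa using h)
    rw [abs_zero, zero_pow two_ne_zero, zero_div]
    positivity
  · calc |u| ^ 2 / |d| ^ (1 + 2 * θ) ≤ (K * |d|) ^ 2 / |d| ^ (1 + 2 * θ) := by gcongr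
      _ = K ^ 2 * (|d| ^ 2 / |d| ^ (1 + 2 * θ)) := by ring
      _ = K ^ 2 * |d| ^ (1 - 2 * θ) := by rw [abs_sq_div_rpow_eq hd]

lemma integral_integral_le_of_abs_sub_le (hθ1 : θ < 1) {F R : ℝ → ℝ} {K a b c d : ℝ}
    (hF : ∀ x ∈ Icc a b, ∀ y ∈ Icc c d, |F x - F y| ≤ K * |x - y|)
    (hR : ∀ x ∈ Icc a b, ∫ y in Icc c d, |x - y| ^ (1 - 2 * θ) ≤ R x)
    (hRint : IntegrableOn R (Icc a b)) :
    ∫ x in Icc a b, ∫ y in Icc c d, |F x - F y| ^ 2 / |x - y| ^ (1 + 2 * θ) ≤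
      K ^ 2 * ∫ x in Icc a b, R x := by
  rw [← integral_const_mul]
  refine setIntegral_mono_on_of_nonneg measurableSet_Icc
    (fun x _ => integral_nonneg fun y => by positivity) (hRint.const_mul _) fun x hx => ?_
  calc ∫ y in Icc c d, |F x - F y| ^ 2 / |x - y| ^ (1 + 2 * θ)
      ≤ ∫ y in Icc c d, K ^ 2 * |x - y| ^ (1 - 2 * θ) :=
        setIntegral_mono_on_of_nonneg measurableSet_Icc (fun y _ => by positivity)
          ((integrableOn_abs_sub_rpow (by linarith) x c d).const_mul _)
          fun y hy => abs_sq_div_rpow_le (hF x hx y hy)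
    _ = K ^ 2 * ∫ y in Icc c d, |x - y| ^ (1 - 2 * θ) := integral_const_mul _ _
    _ ≤ K ^ 2 * R x := by gcongr; exact hR x hx

lemma integral_integral_of_hasSlopeOn {F : ℝ → ℝ} {s : ℝ} {I : Set ℝ} (hI : MeasurableSet I)
    (hF : HasSlopeOn F s I) :
    ∫ x in I, ∫ y in I, |F x - F y| ^ 2 / |x - y| ^ (1 + 2 * θ) =
      s ^ 2 * ∫ x in I, ∫ y in I, |x - y| ^ (1 - 2 * θ) := by
  rw [← integral_const_mul]
  refine setIntegral_congr_fun hI fun x hx => ?_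
  rw [← integral_const_mul]
  refine setIntegral_congr_ae hI ?_
  -- off the null diagonal: at `y = x` the right integrand can be `s ^ 2 * 0 ^ 0 = s ^ 2`
  filter_upwards [volume.ae_ne x] with y hyx hy
  rw [hF x hx y hy, abs_mul, mul_pow, sq_abs, mul_div_assoc,
    abs_sq_div_rpow_eq (sub_ne_zero.mpr hyx.symm)]

lemma integral_integral_le_of_neighbour (hθ1 : θ < 1) {F : ℝ → ℝ} {s s' a b c d : ℝ}
    (hF : ∀ x ∈ Icc a b, ∀ y ∈ Icc c d, |F x - F y| ≤ (|s| + |s'|) * |x - y|)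
    (hR : ∀ x ∈ Icc a b, ∫ y in Icc c d, |x - y| ^ (1 - 2 * θ) ≤
      16 * ∫ y in Icc a b, |x - y| ^ (1 - 2 * θ)) :
    ∫ x in Icc a b, ∫ y in Icc c d, |F x - F y| ^ 2 / |x - y| ^ (1 + 2 * θ) ≤
      32 * (s ^ 2 + s' ^ 2) * ∫ x in Icc a b, ∫ y in Icc a b, |x - y| ^ (1 - 2 * θ) := by
  have hK : (|s| + |s'|) ^ 2 ≤ 2 * (s ^ 2 + s' ^ 2) := by
    nlinarith [sq_nonneg (|s| - |s'|), sq_abs s, sq_abs s']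
  have hE : 0 ≤ ∫ x in Icc a b, ∫ y in Icc a b, |x - y| ^ (1 - 2 * θ) :=
    integral_nonneg fun x => integral_nonneg fun y => by positivity
  calc _ ≤ (|s| + |s'|) ^ 2 * ∫ x in Icc a b, 16 * ∫ y in Icc a b, |x - y| ^ (1 - 2 * θ) :=
        integral_integral_le_of_abs_sub_le hθ1 hF hR
          ((integrableOn_integral_abs_sub_rpow (by linarith) a b).const_mul 16)
    _ = 16 * (|s| + |s'|) ^ 2 * ∫ x in Icc a b, ∫ y in Icc a b, |x - y| ^ (1 - 2 * θ) := by
        rw [integral_const_mul]; ring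
    _ ≤ 32 * (s ^ 2 + s' ^ 2) * ∫ x in Icc a b, ∫ y in Icc a b, |x - y| ^ (1 - 2 * θ) := by
        nlinarith

lemma integral_integral_of_hasSlopeOn_right_le (hθ0 : 0 < θ) (hθ1 : θ < 1) {F : ℝ → ℝ}
    {s s' a b c : ℝ} (hbc : c - b = b - a) (hF : HasSlopeOn F s (Icc a b))
    (hF' : HasSlopeOn F s' (Icc b c)) :
    ∫ x in Icc a b, ∫ y in Icc b c, |F x - F y| ^ 2 / |x - y| ^ (1 + 2 * θ) ≤
      32 * (s ^ 2 + s' ^ 2) * ∫ x in Icc a b, ∫ y in Icc a b, |x - y| ^ (1 - 2 * θ) :=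
  integral_integral_le_of_neighbour hθ1
    (fun x hx y hy => abs_sub_le_of_hasSlopeOn hF hF' hx hy)
    (fun x hx => integral_abs_sub_rpow_right_le (by linarith) (by linarith) hbc hx)

lemma integral_integral_of_hasSlopeOn_left_le (hθ0 : 0 < θ) (hθ1 : θ < 1) {F : ℝ → ℝ}
    {s s' a b c : ℝ} (hbc : c - b = b - a) (hF : HasSlopeOn F s (Icc a b))
    (hF' : HasSlopeOn F s' (Icc b c)) :
    ∫ x in Icc b c, ∫ y in Icc a b, |F x - F y| ^ 2 / |x - y| ^ (1 + 2 * θ) ≤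
      32 * (s ^ 2 + s' ^ 2) * ∫ x in Icc b c, ∫ y in Icc b c, |x - y| ^ (1 - 2 * θ) :=
  integral_integral_le_of_neighbour hθ1
    (fun x hx y hy => by
      rw [abs_sub_comm, abs_sub_comm x]; exact abs_sub_le_of_hasSlopeOn hF hF' hy hx)
    (fun x hx => integral_abs_sub_rpow_left_le (by linarith) (by linarith) hbc hx)

end Gagliardo

lemma sum_sum_near_add_le {m : ℕ} {a : ℕ → ℝ} (ha : ∀ i, 0 ≤ a i) :
    ∑ i ∈ Finset.range m, ∑ j ∈ Finset.range m,
        (if i ≤ j + 1 ∧ j ≤ i + 1 then a i + a j else 0) ≤ 6 * ∑ i ∈ Finset.range m, a i := by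
  have hrow : ∀ i, ∑ j ∈ Finset.range m, (if i ≤ j + 1 ∧ j ≤ i + 1 then a i else 0) ≤
      3 * a i := fun i => by
    rw [← Finset.sum_filter, Finset.sum_const, nsmul_eq_mul]
    gcongr
    · exact ha i
    have hsub : (Finset.range m).filter (fun j => i ≤ j + 1 ∧ j ≤ i + 1) ⊆
        Finset.Icc (i - 1) (i + 1) :=
      fun j hj => by simp only [Finset.mem_filter, Finset.mem_Icc] at hj ⊢; omega
    have := (Finset.card_le_card hsub).trans_eq (Nat.card_Icc _ _)
    exact_mod_cast this.trans (by omega)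
  have hswap : ∑ i ∈ Finset.range m, ∑ j ∈ Finset.range m,
      (if i ≤ j + 1 ∧ j ≤ i + 1 then a j else 0) =
      ∑ i ∈ Finset.range m, ∑ j ∈ Finset.range m, (if i ≤ j + 1 ∧ j ≤ i + 1 then a i else 0) := by
    rw [Finset.sum_comm]
    simp only [and_comm]
  calc _ = ∑ i ∈ Finset.range m, ∑ j ∈ Finset.range m,
        ((if i ≤ j + 1 ∧ j ≤ i + 1 then a i else 0) +
          (if i ≤ j + 1 ∧ j ≤ i + 1 then a j else 0)) := by
        simp only [ite_add_ite, add_zero]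
    _ = 2 * ∑ i ∈ Finset.range m, ∑ j ∈ Finset.range m,
        (if i ≤ j + 1 ∧ j ≤ i + 1 then a i else 0) := by
        simp only [Finset.sum_add_distrib, hswap]; ring
    _ ≤ 2 * ∑ i ∈ Finset.range m, 3 * a i := by gcongr with i; exact hrow i
    _ = 6 * ∑ i ∈ Finset.range m, a i := by rw [← Finset.mul_sum]; ring

def cell (n i : ℕ) : Set ℝ := Icc ((i : ℝ) / ((n : ℝ) + 1)) (((i : ℝ) + 1) / ((n : ℝ) + 1))

lemma cell_succ (n i : ℕ) :
    cell n (i + 1) = Icc (((i : ℝ) + 1) / ((n : ℝ) + 1)) (((i : ℝ) + 1 + 1) / ((n : ℝ) + 1)) := by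
  simp only [cell, Nat.cast_succ]

lemma measurableSet_cell (n i : ℕ) : MeasurableSet (cell n i) := measurableSet_Icc

noncomputable def cellEnergy (θ : ℝ) (n : ℕ) : ℝ :=
  ∫ x in cell n 0, ∫ y in cell n 0, |x - y| ^ (1 - 2 * θ)

lemma cellEnergy_nonneg (θ : ℝ) (n : ℕ) : 0 ≤ cellEnergy θ n :=
  integral_nonneg fun x => integral_nonneg fun y => by positivity

lemma integral_integral_cell_eq_cellEnergy {θ : ℝ} (hθ1 : θ < 1) (n i : ℕ) :
    ∫ x in cell n i, ∫ y in cell n i, |x - y| ^ (1 - 2 * θ) = cellEnergy θ n := by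
  have hlen : ∀ j : ℕ,
      ((j : ℝ) + 1) / ((n : ℝ) + 1) - (j : ℝ) / ((n : ℝ) + 1) = 1 / ((n : ℝ) + 1) :=
    fun j => by ring
  have hle : ∀ j : ℕ, (j : ℝ) / ((n : ℝ) + 1) ≤ ((j : ℝ) + 1) / ((n : ℝ) + 1) :=
    fun j => by gcongr; linarith
  rw [cellEnergy, cell, cell, integral_integral_abs_sub_rpow (by linarith) (hle i),
    integral_integral_abs_sub_rpow (by linarith) (hle 0), hlen, hlen]

lemma gagliardoSq_eq_sum_cell (θ : ℝ) (n : ℕ) (F : ℝ → ℝ) :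
    gagliardoSq θ n F = ∑ i ∈ Finset.range (n + 1), ∑ j ∈ Finset.range (n + 1),
      if i ≤ j + 1 ∧ j ≤ i + 1 then
        ∫ x in cell n i, ∫ y in cell n j, |F x - F y| ^ 2 / |x - y| ^ (1 + 2 * θ)
      else 0 := rfl

section Mesh

variable {θ : ℝ} {n : ℕ} {F : ℝ → ℝ} {S : ℕ → ℝ}

lemma integral_integral_cell_le (hθ0 : 0 < θ) (hθ1 : θ < 1)
    (hF : ∀ i ≤ n, HasSlopeOn F (S i) (cell n i)) {i j : ℕ} (hi : i ≤ n) (hj : j ≤ n)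
    (hij : i ≤ j + 1) (hji : j ≤ i + 1) :
    ∫ x in cell n i, ∫ y in cell n j, |F x - F y| ^ 2 / |x - y| ^ (1 + 2 * θ) ≤
      32 * (S i ^ 2 + S j ^ 2) * cellEnergy θ n := by
  have hbc : ∀ k : ℕ, ((k : ℝ) + 1 + 1) / ((n : ℝ) + 1) - ((k : ℝ) + 1) / ((n : ℝ) + 1) =
      ((k : ℝ) + 1) / ((n : ℝ) + 1) - (k : ℝ) / ((n : ℝ) + 1) := fun k => by ring
  rcases (by omega : j = i ∨ j = i + 1 ∨ i = j + 1) with rfl | rfl | rfl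
  · rw [integral_integral_of_hasSlopeOn (measurableSet_cell n j) (hF j hj),
      integral_integral_cell_eq_cellEnergy hθ1]
    nlinarith [sq_nonneg (S j), cellEnergy_nonneg θ n]
  · have h := integral_integral_of_hasSlopeOn_right_le hθ0 hθ1 (hbc i) (hF i hi)
      (by rw [← cell_succ]; exact hF (i + 1) hj)
    rwa [← cell_succ, ← cell, integral_integral_cell_eq_cellEnergy hθ1] at h
  · have h := integral_integral_of_hasSlopeOn_left_le hθ0 hθ1 (hbc j) (hF j hj)
      (by rw [← cell_succ]; exact hF (j + 1) hi)
    rwa [← cell_succ, ← cell, integral_integral_cell_eq_cellEnergy hθ1, add_comm (S j ^ 2)] at h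

lemma gagliardoSq_le_sum_sq (hθ0 : 0 < θ) (hθ1 : θ < 1)
    (hF : ∀ i ≤ n, HasSlopeOn F (S i) (cell n i)) :
    gagliardoSq θ n F ≤ 192 * cellEnergy θ n * ∑ i ∈ Finset.range (n + 1), S i ^ 2 := by
  have hE := cellEnergy_nonneg θ n
  calc gagliardoSq θ n F
      ≤ ∑ i ∈ Finset.range (n + 1), ∑ j ∈ Finset.range (n + 1),
          if i ≤ j + 1 ∧ j ≤ i + 1 then
            32 * cellEnergy θ n * S i ^ 2 + 32 * cellEnergy θ n * S j ^ 2
          else 0 := by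
        rw [gagliardoSq_eq_sum_cell]
        gcongr with i hi j hj
        split_ifs with hij
        · rw [Finset.mem_range, Nat.lt_succ_iff] at hi hj
          linarith [integral_integral_cell_le hθ0 hθ1 hF hi hj hij.1 hij.2]
        · exact le_rfl
    _ ≤ 6 * ∑ i ∈ Finset.range (n + 1), 32 * cellEnergy θ n * S i ^ 2 :=
        sum_sum_near_add_le fun i => by positivity
    _ = 192 * cellEnergy θ n * ∑ i ∈ Finset.range (n + 1), S i ^ 2 := by
        rw [← Finset.mul_sum]; ring

lemma sum_sq_le_gagliardoSq (hθ1 : θ < 1) (hF : ∀ i ≤ n, HasSlopeOn F (S i) (cell n i)) :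
    cellEnergy θ n * ∑ i ∈ Finset.range (n + 1), S i ^ 2 ≤ gagliardoSq θ n F := by
  rw [gagliardoSq_eq_sum_cell, Finset.mul_sum]
  refine Finset.sum_le_sum fun i hi => ?_
  have hdiag : cellEnergy θ n * S i ^ 2 =
      ∫ x in cell n i, ∫ y in cell n i, |F x - F y| ^ 2 / |x - y| ^ (1 + 2 * θ) := by
    rw [integral_integral_of_hasSlopeOn (measurableSet_cell n i)
      (hF i (Nat.lt_succ_iff.mp (Finset.mem_range.mp hi))),
      integral_integral_cell_eq_cellEnergy hθ1, mul_comm]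
  rw [hdiag]
  refine (Finset.single_le_sum (f := fun j => if i ≤ j + 1 ∧ j ≤ i + 1 then
    ∫ x in cell n i, ∫ y in cell n j, |F x - F y| ^ 2 / |x - y| ^ (1 + 2 * θ) else 0)
    (fun j _ => ?_) hi).trans_eq' (by simp)
  split_ifs
  exacts [integral_nonneg fun x => integral_nonneg fun y => by positivity, le_rfl]

lemma gagliardoSq_le_of_abs_slope_le (hθ0 : 0 < θ) (hθ1 : θ < 1) {G : ℝ → ℝ} {σ : ℕ → ℝ}
    {L : ℝ} (hF : ∀ i ≤ n, HasSlopeOn F (S i) (cell n i))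
    (hG : ∀ i ≤ n, HasSlopeOn G (σ i) (cell n i)) (hSσ : ∀ i ≤ n, |S i| ≤ L * |σ i|) :
    gagliardoSq θ n F ≤ 192 * L ^ 2 * gagliardoSq θ n G := by
  have hE := cellEnergy_nonneg θ n
  have hsq : ∀ i ∈ Finset.range (n + 1), S i ^ 2 ≤ L ^ 2 * σ i ^ 2 := fun i hi => by
    have h := pow_le_pow_left₀ (abs_nonneg _)
      (hSσ i (Nat.lt_succ_iff.mp (Finset.mem_range.mp hi))) 2
    rwa [sq_abs, mul_pow, sq_abs] at h
  calc gagliardoSq θ n F ≤ 192 * cellEnergy θ n * ∑ i ∈ Finset.range (n + 1), S i ^ 2 :=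
        gagliardoSq_le_sum_sq hθ0 hθ1 hF
    _ ≤ 192 * cellEnergy θ n * ∑ i ∈ Finset.range (n + 1), L ^ 2 * σ i ^ 2 := by
        gcongr with i hi; exact hsq i hi
    _ = 192 * L ^ 2 * (cellEnergy θ n * ∑ i ∈ Finset.range (n + 1), σ i ^ 2) := by
        rw [← Finset.mul_sum]; ring
    _ ≤ 192 * L ^ 2 * gagliardoSq θ n G := by gcongr; exact sum_sq_le_gagliardoSq hθ1 hG

lemma gagliardo_le_of_abs_slope_le (hθ0 : 0 < θ) (hθ1 : θ < 1) {G : ℝ → ℝ} {σ : ℕ → ℝ}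
    {L : ℝ} (hL : 0 ≤ L) (hF : ∀ i ≤ n, HasSlopeOn F (S i) (cell n i))
    (hG : ∀ i ≤ n, HasSlopeOn G (σ i) (cell n i)) (hSσ : ∀ i ≤ n, |S i| ≤ L * |σ i|) :
    gagliardo θ n F ≤ 14 * L * gagliardo θ n G := by
  have hG0 : 0 ≤ gagliardoSq θ n G :=
    (mul_nonneg (cellEnergy_nonneg θ n) (Finset.sum_nonneg fun i _ => sq_nonneg (σ i))).trans
      (sum_sq_le_gagliardoSq hθ1 hG)
  calc gagliardo θ n F ≤ Real.sqrt ((14 * L) ^ 2 * gagliardoSq θ n G) := by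
        refine Real.sqrt_le_sqrt ((gagliardoSq_le_of_abs_slope_le hθ0 hθ1 hF hG hSσ).trans ?_)
        nlinarith
    _ = 14 * L * gagliardo θ n G := by
        rw [Real.sqrt_mul' _ hG0, Real.sqrt_sq (by positivity), gagliardo]

end Mesh

lemma max_zero_one_sub_abs_eq {t : ℝ} (ht0 : 0 ≤ t) (ht1 : t ≤ 1) (i k : ℕ) :
    max 0 (1 - |(i : ℝ) + t - k|) =
      (if k = i then 1 - t else 0) + (if k = i + 1 then t else 0) := by
  rcases lt_trichotomy k i with hk | rfl | hk
  · have : (k : ℝ) + 1 ≤ i := by exact_mod_cast hk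
    rw [if_neg hk.ne, if_neg (by omega), max_eq_left]
    · ring
    · linarith [le_abs_self ((i : ℝ) + t - k)]
  · rw [if_pos rfl, if_neg (by omega), max_eq_right] <;> simp [abs_of_nonneg ht0, ht1]
  · rcases (by omega : k = i + 1 ∨ i + 2 ≤ k) with rfl | hk2
    · rw [if_neg (by omega), if_pos rfl, Nat.cast_succ,
        show (i : ℝ) + t - (i + 1) = -(1 - t) by ring, abs_neg, abs_of_nonneg (by linarith)]
      simp [ht0]
    · have : (i : ℝ) + 2 ≤ k := by exact_mod_cast hk2
      rw [if_neg hk.ne', if_neg (by omega), max_eq_left]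
      · ring
      · linarith [neg_abs_le ((i : ℝ) + t - k)]

-- The indicator of `Icc 1 n` implements the convention `u₀ = u_{n+1} = 0`.
lemma linInterp_eq_of_mem_cell {n i : ℕ} (u : ℕ → ℝ) {x : ℝ} (hx : x ∈ cell n i) :
    linInterp n u x =
      (↑(Finset.Icc 1 n) : Set ℕ).indicator u i * (1 - (((n : ℝ) + 1) * x - i)) +
        (↑(Finset.Icc 1 n) : Set ℕ).indicator u (i + 1) * (((n : ℝ) + 1) * x - i) := by
  have hN : (0 : ℝ) < (n : ℝ) + 1 := by positivity
  set t := ((n : ℝ) + 1) * x - i with ht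
  have ht0 : 0 ≤ t := by
    have := (div_le_iff₀ hN).mp hx.1; linarith
  have ht1 : t ≤ 1 := by
    have := (le_div_iff₀ hN).mp hx.2; linarith
  have hx' : ((n : ℝ) + 1) * x = i + t := by ring
  simp only [linInterp, hx', max_zero_one_sub_abs_eq ht0 ht1, mul_add, mul_ite, mul_zero,
    Finset.sum_add_distrib, Finset.sum_ite_eq', Set.indicator_apply, Finset.mem_coe, ite_mul,
    zero_mul]

lemma hasSlopeOn_linInterp (n i : ℕ) (u : ℕ → ℝ) :
    HasSlopeOn (linInterp n u)
      (((n : ℝ) + 1) * ((↑(Finset.Icc 1 n) : Set ℕ).indicator u (i + 1) -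
        (↑(Finset.Icc 1 n) : Set ℕ).indicator u i)) (cell n i) := fun x hx y hy => by
  rw [linInterp_eq_of_mem_cell u hx, linInterp_eq_of_mem_cell u hy]
  ring

/-- Discrete Sobolev power estimate `‖u^μ‖_{𝐇^θₙ} ≲ ‖u‖_{𝐇^θₙ} ‖u‖_∞^{μ-1}` in
Gagliardo-seminorm form: for every `θ ∈ (0,1)` and `μ ≥ 1` there is `C > 0`,
independent of `n`, such that for every `n ≥ 1` and every nonnegative `u ∈ ℝⁿ`,
`N_{θ,n}(𝔏_n(u^μ)) ≤ C ⬝ N_{θ,n}(𝔏_n u) ⬝ (max_{1≤i≤n} u_i)^{μ-1}`. -/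
theorem stmt15 (θ : ℝ) (hθ0 : 0 < θ) (hθ1 : θ < 1) (μ : ℝ) (hμ : 1 ≤ μ) :
    ∃ C : ℝ, 0 < C ∧ ∀ (n : ℕ) (hn : 1 ≤ n), ∀ u : ℕ → ℝ,
      (∀ i ∈ Finset.Icc 1 n, 0 ≤ u i) →
      gagliardo θ n (linInterp n fun i => u i ^ μ) ≤
        C * gagliardo θ n (linInterp n u) *
          ((Finset.Icc 1 n).sup' (Finset.nonempty_Icc.mpr hn) u) ^ (μ - 1) := by
  refine ⟨14 * μ, by positivity, fun n hn u hu => ?_⟩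
  set M := (Finset.Icc 1 n).sup' (Finset.nonempty_Icc.mpr hn) u
  set v := (↑(Finset.Icc 1 n) : Set ℕ).indicator u with hv_def
  have hM0 : 0 ≤ M := (hu 1 (by simp [hn])).trans (Finset.le_sup' u (by simp [hn]))
  have hv : ∀ i, v i ∈ Icc 0 M := fun i => by
    by_cases hi : i ∈ Finset.Icc 1 n
    · rw [hv_def, Set.indicator_of_mem (Finset.mem_coe.mpr hi)]
      exact ⟨hu i hi, Finset.le_sup' u hi⟩
    · rw [hv_def, Set.indicator_of_notMem (mt Finset.mem_coe.mp hi)]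
      exact ⟨le_rfl, hM0⟩
  have hpow : (↑(Finset.Icc 1 n) : Set ℕ).indicator (fun i => u i ^ μ) = fun i => v i ^ μ :=
    Set.indicator_comp_of_zero (g := fun t : ℝ => t ^ μ) (Real.zero_rpow (by linarith))
  have hslope : ∀ i, |((n : ℝ) + 1) * (v (i + 1) ^ μ - v i ^ μ)| ≤
      μ * M ^ (μ - 1) * |((n : ℝ) + 1) * (v (i + 1) - v i)| := fun i => by
    rw [abs_mul, abs_mul, mul_left_comm]
    gcongr
    exact abs_rpow_sub_rpow_le hμ (hv _) (hv _)
  have h := gagliardo_le_of_abs_slope_le hθ0 hθ1 (L := μ * M ^ (μ - 1))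
    (mul_nonneg (by linarith) (Real.rpow_nonneg hM0 _))
    (fun i _ => hasSlopeOn_linInterp n i (fun i => u i ^ μ))
    (fun i _ => hasSlopeOn_linInterp n i u) (fun i _ => by rw [hpow]; exact hslope i)
  linarith
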